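/- Let an observational semantics over types S, R, A with transition relation Tr, local extraction function E_l, local reconstruction function I_l, and initial states S₀ satisfy the local faithfulness condition: for all r, s, s' with Tr(r, s, s') and every actual trace T^w obtained by extraction along a generated virtual trace from an initial state ending in s, setting a = E_l(s, r, s', T^w), one has I_l(s, T^w ++ [a]) = (r, s'). Then the extended extraction E is injective on the set of finite generated virtual traces: if T^v and U^v are generated virtual traces from initial states and E(T^v) = E(U^v), then T^v = U^v (the extraction is done without loss of information). -/

import Mathlib

variable {S R A : Type*}

/-- A generated virtual trace from a state: each event `(rᵢ, sᵢ)` is a transition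
from the previous state. -/
def IsGenTrace (Tr : R → S → S → Prop) : S → List (R × S) → Prop
  | _, [] => True
  | s, (r, s') :: evs => Tr r s s' ∧ IsGenTrace Tr s' evs

/-- The final state reached by a virtual trace. -/
def finalState : S → List (R × S) → S
  | s, [] => s
  | _, (_, s') :: evs => finalState s' evs

/-- Auxiliary extraction with an accumulator holding the already generated actual trace. -/
def extractAux (El : S → R → S → List A → A) : S → List A → List (R × S) → List A
  | _, _, [] => []
  | s, acc, (r, s') :: evs =>
      El s r s' acc :: extractAux El s' (acc ++ [El s r s' acc]) evs

/-- The extended extraction function `E`: `aᵢ = E_l(s_{i-1}, rᵢ, sᵢ, [a₁,…,a_{i-1}])`. -/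
def extract (El : S → R → S → List A → A) (s₀ : S) (evs : List (R × S)) : List A :=
  extractAux El s₀ [] evs

/-- Auxiliary reconstruction with an accumulator holding the already read actual trace. -/
def reconAux (Il : S → List A → R × S) : S → List A → List A → List (R × S)
  | _, _, [] => []
  | s, acc, a :: as =>
      Il s (acc ++ [a]) :: reconAux Il (Il s (acc ++ [a])).2 (acc ++ [a]) as

/-- The extended reconstruction function `I`: `(rᵢ, sᵢ) = I_l(s_{i-1}, [a₁,…,aᵢ])`. -/
def recon (Il : S → List A → R × S) (s₀ : S) (as : List A) : List (R × S) :=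
  reconAux Il s₀ [] as

/-- The local faithfulness condition. -/
def LocalFaithful (Tr : R → S → S → Prop) (El : S → R → S → List A → A)
    (Il : S → List A → R × S) (S₀ : Set S) : Prop :=
  ∀ r s s', Tr r s s' →
    ∀ s₀ ∈ S₀, ∀ evs : List (R × S), IsGenTrace Tr s₀ evs → finalState s₀ evs = s →
      Il s (extract El s₀ evs ++ [El s r s' (extract El s₀ evs)]) = (r, s')

/-! The reconstruction `I` is a left inverse of the extraction `E` on generated traces, so `E` is
injective there. Reconstruction recovers the events one at a time: as long as the current state and
the actual trace read so far arise by extraction along a generated trace from an initial state,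
local faithfulness says that `I_l` returns exactly the next event, and the invariant is preserved. -/

section Append

variable (Tr : R → S → S → Prop) (El : S → R → S → List A → A)

lemma finalState_append_singleton (s : S) (evs : List (R × S)) (r : R) (s' : S) :
    finalState s (evs ++ [(r, s')]) = s' := by
  induction evs generalizing s with
  | nil => rfl
  | cons ev evs ih => exact ih ev.2

lemma IsGenTrace.append_singleton {s : S} {evs : List (R × S)} {r : R} {s' : S}
    (hgen : IsGenTrace Tr s evs) (htr : Tr r (finalState s evs) s') :
    IsGenTrace Tr s (evs ++ [(r, s')]) := by
  induction evs generalizing s with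
  | nil => exact ⟨htr, trivial⟩
  | cons ev evs ih => exact ⟨hgen.1, ih hgen.2 htr⟩

lemma extractAux_append_singleton (s : S) (acc : List A) (evs : List (R × S)) (r : R) (s' : S) :
    extractAux El s acc (evs ++ [(r, s')]) =
      extractAux El s acc evs ++
        [El (finalState s evs) r s' (acc ++ extractAux El s acc evs)] := by
  induction evs generalizing s acc with
  | nil => simp [extractAux, finalState]
  | cons ev evs ih => simp [extractAux, finalState, ih]

lemma extract_append_singleton (s₀ : S) (evs : List (R × S)) (r : R) (s' : S) :
    extract El s₀ (evs ++ [(r, s')]) =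
      extract El s₀ evs ++ [El (finalState s₀ evs) r s' (extract El s₀ evs)] := by
  simpa [extract] using extractAux_append_singleton El s₀ [] evs r s'

end Append

section Reachable

variable {Tr : R → S → S → Prop} {El : S → R → S → List A → A} {Il : S → List A → R × S}
  {S₀ : Set S}

def IsReachable (Tr : R → S → S → Prop) (El : S → R → S → List A → A) (S₀ : Set S)
    (s : S) (acc : List A) : Prop :=
  ∃ s₀ ∈ S₀, ∃ pre : List (R × S),
    IsGenTrace Tr s₀ pre ∧ finalState s₀ pre = s ∧ extract El s₀ pre = acc

lemma isReachable_of_mem {s₀ : S} (hs₀ : s₀ ∈ S₀) : IsReachable Tr El S₀ s₀ [] :=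
  ⟨s₀, hs₀, [], trivial, rfl, rfl⟩

lemma IsReachable.step {s s' : S} {acc : List A} {r : R} (h : IsReachable Tr El S₀ s acc)
    (htr : Tr r s s') : IsReachable Tr El S₀ s' (acc ++ [El s r s' acc]) := by
  obtain ⟨s₀, hs₀, pre, hgen, rfl, rfl⟩ := h
  exact ⟨s₀, hs₀, pre ++ [(r, s')], hgen.append_singleton Tr htr,
    finalState_append_singleton s₀ pre r s', extract_append_singleton El s₀ pre r s'⟩

lemma LocalFaithful.il_eq (hLF : LocalFaithful Tr El Il S₀) {s s' : S} {acc : List A} {r : R}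
    (h : IsReachable Tr El S₀ s acc) (htr : Tr r s s') :
    Il s (acc ++ [El s r s' acc]) = (r, s') := by
  obtain ⟨s₀, hs₀, pre, hgen, rfl, rfl⟩ := h
  exact hLF r _ s' htr s₀ hs₀ pre hgen rfl

lemma LocalFaithful.reconAux_extractAux (hLF : LocalFaithful Tr El Il S₀) {s : S}
    {acc : List A} {evs : List (R × S)} (h : IsReachable Tr El S₀ s acc)
    (hgen : IsGenTrace Tr s evs) :
    reconAux Il s acc (extractAux El s acc evs) = evs := by
  induction evs generalizing s acc with
  | nil => rfl
  | cons ev evs ih =>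
    obtain ⟨r, s'⟩ := ev
    obtain ⟨htr, hgen⟩ := hgen
    simp only [extractAux, reconAux, hLF.il_eq h htr, ih (h.step htr) hgen]

lemma LocalFaithful.recon_extract (hLF : LocalFaithful Tr El Il S₀) {s₀ : S} (hs₀ : s₀ ∈ S₀)
    {evs : List (R × S)} (hgen : IsGenTrace Tr s₀ evs) :
    recon Il s₀ (extract El s₀ evs) = evs :=
  hLF.reconAux_extractAux (isReachable_of_mem hs₀) hgen

end Reachable

theorem extract_injOn_genTraces_general
    (Tr : R → S → S → Prop)
    (El : S → R → S → List A → A) (Il : S → List A → R × S) (S₀ : Set S)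
    (hLF : LocalFaithful Tr El Il S₀) :
    ∀ s₀ ∈ S₀, ∀ u₀ ∈ S₀, ∀ evs fvs : List (R × S),
      IsGenTrace Tr s₀ evs → IsGenTrace Tr u₀ fvs →
      (s₀, extract El s₀ evs) = (u₀, extract El u₀ fvs) →
      (s₀, evs) = (u₀, fvs) := by
  intro s₀ hs₀ u₀ hu₀ evs fvs hevs hfvs heq
  obtain ⟨rfl, hext⟩ := Prod.mk.inj heq
  calc (s₀, evs) = (s₀, recon Il s₀ (extract El s₀ evs)) := by rw [hLF.recon_extract hs₀ hevs]
    _ = (s₀, fvs) := by rw [hext, hLF.recon_extract hu₀ hfvs]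

/-- Under the local faithfulness condition, the extended extraction
`E` is injective on the set of finite generated virtual traces: extraction is done
without loss of information. -/
theorem extract_injOn_genTraces
    (Tr : R → S → S → Prop)
    (hFun : ∀ r s s' s'', Tr r s s' → Tr r s s'' → s' = s'')
    (El : S → R → S → List A → A) (Il : S → List A → R × S) (S₀ : Set S)
    (hLF : LocalFaithful Tr El Il S₀) :
    ∀ s₀ ∈ S₀, ∀ u₀ ∈ S₀, ∀ evs fvs : List (R × S),
      IsGenTrace Tr s₀ evs → IsGenTrace Tr u₀ fvs →
      (s₀, extract El s₀ evs) = (u₀, extract El u₀ fvs) →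
      (s₀, evs) = (u₀, fvs) :=
  extract_injOn_genTraces_general Tr El Il S₀ hLF
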